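/- arXiv:1801.08430 — 2 statements merged into one kernel-verified Lean document; each statement's English description precedes it below -/
import Mathlib

section
/- Define χ_{abcd} = 6·G^e_{ab}·G_{cde} and F_{bcad} = χ_{a[bc]d} (antisymmetrization over bc). Then χ_{abcd} = χ_{(abcd)} + (2/3)·F_{bcad} + (2/3)·F_{bdac}, where χ_{(abcd)} = g_{a(b}g_{cd)}. -/
open Matrix

noncomputable section

/-- Symmetrization of a trilinear expression over its three displayed indices. -/
def sym3 (T : Fin 5 → Fin 5 → Fin 5 → ℝ) (b c d : Fin 5) : ℝ :=
  (T b c d + T b d c + T c b d + T c d b + T d b c + T d c b) / 6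

/-- `χ_{abcd} = 6·G^e_{ab}·G_{cde}`. -/
def chi (gInv : Matrix (Fin 5) (Fin 5) ℝ) (G : Fin 5 → Fin 5 → Fin 5 → ℝ)
    (a b c d : Fin 5) : ℝ :=
  6 * ∑ e, ∑ f, gInv e f * G f a b * G c d e

/-- `F_{bcad} = χ_{a[bc]d}` (antisymmetrization over `b,c`). -/
def Fchi (gInv : Matrix (Fin 5) (Fin 5) ℝ) (G : Fin 5 → Fin 5 → Fin 5 → ℝ)
    (b c a d : Fin 5) : ℝ :=
  (chi gInv G a b c d - chi gInv G a c b d) / 2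

/-- Full symmetrization `χ_{(abcd)}`. -/
def sym4chi (gInv : Matrix (Fin 5) (Fin 5) ℝ) (G : Fin 5 → Fin 5 → Fin 5 → ℝ)
    (a b c d : Fin 5) : ℝ :=
  (1 / 24) * ∑ σ : Equiv.Perm (Fin 4),
    chi gInv G (![a, b, c, d] (σ 0)) (![a, b, c, d] (σ 1))
      (![a, b, c, d] (σ 2)) (![a, b, c, d] (σ 3))

lemma sum_perm_succ {n : ℕ} (F : Equiv.Perm (Fin (n+1)) → ℝ) :
    ∑ σ : Equiv.Perm (Fin (n+1)), F σ
      = ∑ i : Fin (n+1), ∑ τ : Equiv.Perm (Fin n), F (Equiv.Perm.decomposeFin.symm (i, τ)) := by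
  rw [← Equiv.sum_comp Equiv.Perm.decomposeFin.symm F, Fintype.sum_prod_type]

lemma perm4_expand (f : Fin 4 → Fin 4 → Fin 4 → Fin 4 → ℝ) :
    ∑ σ : Equiv.Perm (Fin 4), f (σ 0) (σ 1) (σ 2) (σ 3) =
      f 0 1 2 3 + f 0 1 3 2 + f 0 2 1 3 + f 0 2 3 1 + f 0 3 2 1 + f 0 3 1 2 +
      f 1 0 2 3 + f 1 0 3 2 + f 1 2 0 3 + f 1 2 3 0 + f 1 3 2 0 + f 1 3 0 2 +
      f 2 1 0 3 + f 2 1 3 0 + f 2 0 1 3 + f 2 0 3 1 + f 2 3 0 1 + f 2 3 1 0 +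
      f 3 1 2 0 + f 3 1 0 2 + f 3 2 1 0 + f 3 2 0 1 + f 3 0 2 1 + f 3 0 1 2 := by
  have h1 : (1 : Fin 4) = Fin.succ 0 := rfl
  have h2 : (2 : Fin 4) = Fin.succ (Fin.succ 0) := rfl
  have h3 : (3 : Fin 4) = Fin.succ (Fin.succ (Fin.succ 0)) := rfl
  conv_lhs => rw [h1, h2, h3]
  simp (config := { decide := true }) only [sum_perm_succ (n := 3), sum_perm_succ (n := 2),
    sum_perm_succ (n := 1),
    Finset.univ_unique, Finset.sum_singleton, Fin.sum_univ_succ, Fin.sum_univ_zero,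
    Equiv.Perm.decomposeFin_symm_apply_zero, Equiv.Perm.decomposeFin_symm_apply_succ,
    Equiv.swap_apply_def]
  norm_num [show Fin.succ 2 = (3:Fin 4) from rfl]
  ring

/-- `χ_{abcd} = χ_{(abcd)} + (2/3)F_{bcad} + (2/3)F_{bdac}`, with
`χ_{(abcd)} = g_{a(b}g_{cd)}`. -/
theorem chi_decomposition
    (g gInv : Matrix (Fin 5) (Fin 5) ℝ) (G : Fin 5 → Fin 5 → Fin 5 → ℝ)
    (hsym : g.IsSymm)
    (hinv : g * gInv = 1) (hinv' : gInv * g = 1)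
    (hGsym₁ : ∀ a b c, G a b c = G b a c)
    (hGsym₂ : ∀ a b c, G a b c = G a c b)
    (htrace : ∀ c, ∑ a, ∑ b, gInv a b * G a b c = 0)
    (hnorm : ∀ a b c d,
      6 * sym3 (fun b c d => ∑ e, ∑ f, gInv e f * G f a b * G c d e) b c d
        = sym3 (fun b c d => g a b * g c d) b c d) :
    ∀ a b c d : Fin 5,
      (chi gInv G a b c d
        = sym4chi gInv G a b c d
          + (2 / 3) * Fchi gInv G b c a d + (2 / 3) * Fchi gInv G b d a c) ∧
      sym4chi gInv G a b c d = sym3 (fun b c d => g a b * g c d) b c d := by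
  -- gInv is symmetric
  have hT : gInvᵀ = gInv := by
    have h1 : gInvᵀ * g = 1 := by
      have := congrArg Matrix.transpose hinv
      rwa [Matrix.transpose_mul, hsym, Matrix.transpose_one] at this
    calc gInvᵀ = gInvᵀ * (g * gInv) := by rw [hinv, Matrix.mul_one]
      _ = (gInvᵀ * g) * gInv := by rw [Matrix.mul_assoc]
      _ = gInv := by rw [h1, Matrix.one_mul]
  have hg : ∀ i j, gInv i j = gInv j i := fun i j => by
    calc gInv i j = gInvᵀ j i := (Matrix.transpose_apply gInv j i).symm
      _ = gInv j i := by rw [hT]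
  -- total symmetry of G
  have hG3 : ∀ x y z, G x y z = G y z x := fun x y z => by
    rw [hGsym₁ x y z, hGsym₂ y x z]
  -- symmetries of chi
  have e1 : ∀ p q r s, chi gInv G p q r s = chi gInv G q p r s := fun p q r s => by
    simp only [chi]
    congr 1
    refine Finset.sum_congr rfl fun e _ => Finset.sum_congr rfl fun f _ => ?_
    rw [hGsym₂ f p q]
  have e2 : ∀ p q r s, chi gInv G p q r s = chi gInv G p q s r := fun p q r s => by
    simp only [chi]
    congr 1
    refine Finset.sum_congr rfl fun e _ => Finset.sum_congr rfl fun f _ => ?_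
    rw [hGsym₁ r s e]
  have e3 : ∀ p q r s, chi gInv G p q r s = chi gInv G r s p q := fun p q r s => by
    simp only [chi]
    congr 1
    rw [Finset.sum_comm]
    refine Finset.sum_congr rfl fun e _ => Finset.sum_congr rfl fun f _ => ?_
    rw [hg f e, hG3 e p q, ← hG3 f r s]
    ring
  intro a b c d
  set C := chi gInv G with hC
  -- evaluate sym4chi
  have hS : sym4chi gInv G a b c d = (C a b c d + C a c b d + C a d b c) / 3 := by
    rw [sym4chi, perm4_expand (fun i j k l =>
      chi gInv G (![a,b,c,d] i) (![a,b,c,d] j) (![a,b,c,d] k) (![a,b,c,d] l))]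
    simp only [Matrix.cons_val_zero, Matrix.cons_val_one, Matrix.head_cons,
      Matrix.cons_val_two, Matrix.tail_cons, Matrix.cons_val_three, Matrix.head_fin_const,
      ← hC]
    rw [show C a b d c = C a b c d from (e2 a b c d).symm,
        show C a c d b = C a c b d from (e2 a c b d).symm,
        show C a d c b = C a d b c from (e2 a d b c).symm,
        show C b a c d = C a b c d from (e1 b a c d).trans rfl,
        show C b a d c = C a b c d from (e1 b a d c).trans (e2 a b c d).symm,
        show C b c a d = C a d b c from e3 b c a d,
        show C b c d a = C a d b c from (e3 b c d a).trans (e1 d a b c),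
        show C b d c a = C a c b d from (e3 b d c a).trans (e1 c a b d),
        show C b d a c = C a c b d from e3 b d a c,
        show C c b a d = C a d b c from (e3 c b a d).trans (e2 a d c b),
        show C c b d a = C a d b c from (e3 c b d a).trans ((e1 d a c b).trans (e2 a d c b)),
        show C c a b d = C a c b d from e1 c a b d,
        show C c a d b = C a c b d from (e1 c a d b).trans (e2 a c b d).symm,
        show C c d a b = C a b c d from e3 c d a b,
        show C c d b a = C a b c d from (e3 c d b a).trans (e1 b a c d),
        show C d b c a = C a c b d from (e3 d b c a).trans ((e1 c a d b).trans (e2 a c d b)),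
        show C d b a c = C a c b d from (e3 d b a c).trans (e2 a c d b),
        show C d c b a = C a b c d from (e3 d c b a).trans ((e1 b a d c).trans (e2 a b c d).symm),
        show C d c a b = C a b c d from (e3 d c a b).trans (e2 a b c d).symm,
        show C d a c b = C a d b c from (e1 d a c b).trans (e2 a d c b),
        show C d a b c = C a d b c from e1 d a b c]
    ring
  have hT6 : ∀ x y z, (∑ e, ∑ f, gInv e f * G f a x * G y z e) = C a x y z / 6 := by
    intro x y z
    rw [hC, chi]
    ring
  have h2 : sym4chi gInv G a b c d = sym3 (fun b c d => g a b * g c d) b c d := by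
    rw [hS, ← hnorm a b c d]
    simp only [sym3]
    rw [hT6 b c d, hT6 b d c, hT6 c b d, hT6 c d b, hT6 d b c, hT6 d c b,
        show C a b d c = C a b c d from (e2 a b c d).symm,
        show C a c d b = C a c b d from (e2 a c b d).symm,
        show C a d c b = C a d b c from (e2 a d b c).symm]
    ring
  refine ⟨?_, h2⟩
  rw [hS, Fchi, Fchi, ← hC,
    show C a b d c = C a b c d from (e2 a b c d).symm]
  ring
end
end

section
/- Suppose the Riemann curvature tensor R_{abcd} of a 5-dimensional SO(3)-structure satisfies R_{abc}^{(d}G^{ef)c} = 0 (symmetrization over d,e,f). Then R_{abcd}·F^{cd}_{pq} = (7/4)·R_{abpq}, where F_{bcad} = χ_{a[bc]d} and χ_{abcd} = 6G^e_{ab}G_{cde}. -/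
open Matrix

noncomputable section

private lemma sum_rot3 {M : Type*} [AddCommMonoid M] (f : Fin 5 → Fin 5 → Fin 5 → M) :
    ∑ x, ∑ y, ∑ z, f x y z = ∑ z, ∑ x, ∑ y, f x y z := by
  rw [show (∑ x, ∑ y, ∑ z, f x y z) = ∑ x, ∑ z, ∑ y, f x y z from
    Finset.sum_congr rfl fun x _ => Finset.sum_comm]
  exact Finset.sum_comm

private lemma sum_rot4 {M : Type*} [AddCommMonoid M] (f : Fin 5 → Fin 5 → Fin 5 → Fin 5 → M) :
    ∑ x, ∑ y, ∑ z, ∑ w, f x y z w = ∑ w, ∑ x, ∑ y, ∑ z, f x y z w := by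
  rw [show (∑ x, ∑ y, ∑ z, ∑ w, f x y z w) = ∑ x, ∑ w, ∑ y, ∑ z, f x y z w from
    Finset.sum_congr rfl fun x _ => sum_rot3 (fun y z w => f x y z w)]
  exact Finset.sum_comm

private lemma sum_rot5 {M : Type*} [AddCommMonoid M]
    (f : Fin 5 → Fin 5 → Fin 5 → Fin 5 → Fin 5 → M) :
    ∑ x, ∑ y, ∑ z, ∑ w, ∑ v, f x y z w v = ∑ v, ∑ x, ∑ y, ∑ z, ∑ w, f x y z w v := by
  rw [show (∑ x, ∑ y, ∑ z, ∑ w, ∑ v, f x y z w v) = ∑ x, ∑ v, ∑ y, ∑ z, ∑ w, f x y z w v from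
    Finset.sum_congr rfl fun x _ => sum_rot4 (fun y z w v => f x y z w v)]
  exact Finset.sum_comm

private lemma sum_rot6 {M : Type*} [AddCommMonoid M]
    (f : Fin 5 → Fin 5 → Fin 5 → Fin 5 → Fin 5 → Fin 5 → M) :
    ∑ x, ∑ y, ∑ z, ∑ w, ∑ v, ∑ u, f x y z w v u
      = ∑ u, ∑ x, ∑ y, ∑ z, ∑ w, ∑ v, f x y z w v u := by
  rw [show (∑ x, ∑ y, ∑ z, ∑ w, ∑ v, ∑ u, f x y z w v u)
      = ∑ x, ∑ y, ∑ u, ∑ z, ∑ w, ∑ v, f x y z w v u from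
    Finset.sum_congr rfl fun x _ => Finset.sum_congr rfl fun y _ =>
      sum_rot4 (fun z w v u => f x y z w v u)]
  rw [show (∑ x, ∑ y, ∑ u, ∑ z, ∑ w, ∑ v, f x y z w v u)
      = ∑ x, ∑ u, ∑ y, ∑ z, ∑ w, ∑ v, f x y z w v u from
    Finset.sum_congr rfl fun x _ => Finset.sum_comm]
  exact Finset.sum_comm

private def S5 (gInv : Matrix (Fin 5) (Fin 5) ℝ) (R : Fin 5 → Fin 5 → Fin 5 → Fin 5 → ℝ)
    (a b c d : Fin 5) : ℝ := ∑ d', gInv d d' * R a b c d'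

private def Gup5 (gInv : Matrix (Fin 5) (Fin 5) ℝ) (G : Fin 5 → Fin 5 → Fin 5 → ℝ)
    (e f c : Fin 5) : ℝ :=
  ∑ e', ∑ f', ∑ c', gInv e e' * gInv f f' * gInv c c' * G e' f' c'

/-- If the Riemann tensor of a 5-dimensional `SO(3)`-structure satisfies
`R_{abc}{}^{(d}G^{ef)c} = 0`, then `R_{abcd}·F^{cd}_{pq} = (7/4)·R_{abpq}`. -/
theorem curvature_contraction_identity
    (g gInv : Matrix (Fin 5) (Fin 5) ℝ) (G : Fin 5 → Fin 5 → Fin 5 → ℝ)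
    (R : Fin 5 → Fin 5 → Fin 5 → Fin 5 → ℝ)
    (hsym : g.IsSymm)
    (hinv : g * gInv = 1) (hinv' : gInv * g = 1)
    (hGsym₁ : ∀ a b c, G a b c = G b a c)
    (hGsym₂ : ∀ a b c, G a b c = G a c b)
    (htrace : ∀ c, ∑ a, ∑ b, gInv a b * G a b c = 0)
    (hnorm : ∀ a b c d,
      6 * sym3 (fun b c d => ∑ e, ∑ f, gInv e f * G f a b * G c d e) b c d
        = sym3 (fun b c d => g a b * g c d) b c d)
    (hR₁ : ∀ a b c d, R a b c d = -R b a c d)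
    (hR₂ : ∀ a b c d, R a b c d = -R a b d c)
    (hR₃ : ∀ a b c d, R a b c d = R c d a b)
    (hBianchi : ∀ a b c d, R a b c d + R a c d b + R a d b c = 0)
    (hRG : ∀ a b d e f,
      sym3 (fun d e f => ∑ c, (∑ d', gInv d d' * R a b c d')
          * (∑ e', ∑ f', ∑ c', gInv e e' * gInv f f' * gInv c c' * G e' f' c'))
        d e f = 0) :
    ∀ a b p q : Fin 5,
      ∑ c, ∑ d, R a b c d
          * (∑ c', ∑ d', gInv c c' * gInv d d' * Fchi gInv G c' d' p q)
        = (7 / 4) * R a b p q := by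
  intro a b p q
  -- basic symmetry facts
  have hg : ∀ i j, g i j = g j i := fun i j => (hsym.apply i j).symm
  have hginv : ∀ i j, gInv i j = gInv j i := by
    have h : gInvᵀ = gInv := by
      calc gInvᵀ = gInvᵀ * (g * gInv) := by rw [hinv, mul_one]
      _ = (gInvᵀ * gᵀ) * gInv := by rw [hsym.eq, mul_assoc]
      _ = (g * gInv)ᵀ * gInv := by rw [← Matrix.transpose_mul]
      _ = gInv := by rw [hinv, Matrix.transpose_one, one_mul]
    intro i j
    rw [← congrFun (congrFun h i) j, Matrix.transpose_apply]
  have hδ1 : ∀ u v, (∑ e, g u e * gInv e v) = if u = v then 1 else 0 := fun u v => by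
    rw [← Matrix.mul_apply, hinv, Matrix.one_apply]
  have hδ2 : ∀ u v, (∑ e, gInv u e * g e v) = if u = v then 1 else 0 := fun u v => by
    rw [← Matrix.mul_apply, hinv', Matrix.one_apply]
  have hG3 : ∀ x y z, G x y z = G y z x := fun x y z => by rw [hGsym₁, hGsym₂]
  -- symmetry of `Gup5` in its first two arguments
  have hGup_symm : ∀ y z c, Gup5 gInv G y z c = Gup5 gInv G z y c := by
    intro y z c
    simp only [Gup5]
    rw [Finset.sum_comm]
    exact Finset.sum_congr rfl fun u _ => Finset.sum_congr rfl fun v _ =>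
      Finset.sum_congr rfl fun w _ => by rw [hGsym₁ u v w]; ring
  -- the three-term consequence of `hRG`
  have h3 : ∀ d e f,
      (∑ c, S5 gInv R a b c d * Gup5 gInv G e f c)
        + (∑ c, S5 gInv R a b c e * Gup5 gInv G d f c)
        + (∑ c, S5 gInv R a b c f * Gup5 gInv G d e c) = 0 := by
    intro d e f
    have h : sym3 (fun d e f => ∑ c, S5 gInv R a b c d * Gup5 gInv G e f c) d e f = 0 :=
      hRG a b d e f
    simp only [sym3] at h
    have hB : ∀ x y z, (∑ c, S5 gInv R a b c x * Gup5 gInv G y z c)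
        = ∑ c, S5 gInv R a b c x * Gup5 gInv G z y c := fun x y z =>
      Finset.sum_congr rfl fun c _ => by rw [hGup_symm]
    linarith [h, hB d e f, hB e d f, hB f d e]
  -- contraction of the norm identity: `G_d{}^{ef}G_{qef} = (7/12) g`
  have hQ : ∀ u v, (∑ d, ∑ f, ∑ x, ∑ y, gInv d x * gInv f y * G d f u * G x y v)
      = 7/12 * g u v := by
    intro u v
    have key : ∑ i, ∑ j, gInv i j
          * (6 * sym3 (fun b c d => ∑ e, ∑ f, gInv e f * G f i b * G c d e) j u v)
        = ∑ i, ∑ j, gInv i j * sym3 (fun b c d => g i b * g c d) j u v :=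
      Finset.sum_congr rfl fun i _ => Finset.sum_congr rfl fun j _ => by rw [hnorm]
    have A1 : ∑ i, ∑ j, gInv i j * g i j = 5 := by
      have h1 : ∀ i, ∑ j, gInv i j * g i j = 1 := by
        intro i
        rw [show (∑ j, gInv i j * g i j) = ∑ j, gInv i j * g j i from
          Finset.sum_congr rfl fun j _ => by rw [hg i j]]
        rw [hδ2 i i, if_pos rfl]
      rw [Finset.sum_congr rfl fun i _ => h1 i]
      simp
    have A2 : ∑ i, ∑ j, g i u * (gInv i j * g j v) = g u v := by
      have h1 : ∀ i, ∑ j, g i u * (gInv i j * g j v)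
          = g i u * (if i = v then 1 else 0) := by
        intro i
        rw [← Finset.mul_sum, hδ2 i v]
      rw [Finset.sum_congr rfl fun i _ => h1 i]
      simp [hg u v]
    have A3 : ∑ i, ∑ j, g i v * (gInv i j * g j u) = g u v := by
      have h1 : ∀ i, ∑ j, g i v * (gInv i j * g j u)
          = g i v * (if i = u then 1 else 0) := by
        intro i
        rw [← Finset.mul_sum, hδ2 i u]
      rw [Finset.sum_congr rfl fun i _ => h1 i]
      simp
    have hrhs : ∑ i, ∑ j, gInv i j * sym3 (fun b c d => g i b * g c d) j u v
        = 7/3 * g u v := by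
      calc ∑ i, ∑ j, gInv i j * sym3 (fun b c d => g i b * g c d) j u v
          = ∑ i, ∑ j, ((g u v * (2/6)) * (gInv i j * g i j)
              + ((2:ℝ)/6) * (g i u * (gInv i j * g j v))
              + ((2:ℝ)/6) * (g i v * (gInv i j * g j u))) := by
            refine Finset.sum_congr rfl fun i _ => Finset.sum_congr rfl fun j _ => ?_
            simp only [sym3]
            rw [hg v u, hg v j, hg u j]
            ring
        _ = (g u v * (2/6)) * (∑ i, ∑ j, gInv i j * g i j)
              + ((2:ℝ)/6) * (∑ i, ∑ j, g i u * (gInv i j * g j v))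
              + ((2:ℝ)/6) * (∑ i, ∑ j, g i v * (gInv i j * g j u)) := by
            simp only [Finset.sum_add_distrib, ← Finset.mul_sum]
        _ = 7/3 * g u v := by rw [A1, A2, A3]; ring
    have d1 : ∑ i, ∑ j, gInv i j * (∑ e, ∑ f, gInv e f * G f i j * G u v e) = 0 := by
      calc ∑ i, ∑ j, gInv i j * (∑ e, ∑ f, gInv e f * G f i j * G u v e)
          = ∑ i, ∑ j, ∑ e, ∑ f, gInv i j * (gInv e f * G f i j * G u v e) := by
            refine Finset.sum_congr rfl fun i _ => Finset.sum_congr rfl fun j _ => ?_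
            simp only [Finset.mul_sum]
        _ = ∑ f, ∑ i, ∑ j, ∑ e, gInv i j * (gInv e f * G f i j * G u v e) :=
            sum_rot4 (fun i j e f => gInv i j * (gInv e f * G f i j * G u v e))
        _ = ∑ e, ∑ f, ∑ i, ∑ j, gInv i j * (gInv e f * G f i j * G u v e) :=
            sum_rot4 (fun f i j e => gInv i j * (gInv e f * G f i j * G u v e))
        _ = ∑ e, ∑ f, (gInv e f * G u v e) * ∑ i, ∑ j, gInv i j * G i j f := by
            refine Finset.sum_congr rfl fun e _ => Finset.sum_congr rfl fun f _ => ?_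
            simp only [Finset.mul_sum]
            exact Finset.sum_congr rfl fun i _ => Finset.sum_congr rfl fun j _ => by
              rw [hG3 f i j]; ring
        _ = 0 := by simp only [htrace, mul_zero, Finset.sum_const_zero]
    have d2 : ∑ i, ∑ j, gInv i j * (∑ e, ∑ f, gInv e f * G f i j * G v u e) = 0 := by
      calc ∑ i, ∑ j, gInv i j * (∑ e, ∑ f, gInv e f * G f i j * G v u e)
          = ∑ i, ∑ j, ∑ e, ∑ f, gInv i j * (gInv e f * G f i j * G v u e) := by
            refine Finset.sum_congr rfl fun i _ => Finset.sum_congr rfl fun j _ => ?_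
            simp only [Finset.mul_sum]
        _ = ∑ f, ∑ i, ∑ j, ∑ e, gInv i j * (gInv e f * G f i j * G v u e) :=
            sum_rot4 (fun i j e f => gInv i j * (gInv e f * G f i j * G v u e))
        _ = ∑ e, ∑ f, ∑ i, ∑ j, gInv i j * (gInv e f * G f i j * G v u e) :=
            sum_rot4 (fun f i j e => gInv i j * (gInv e f * G f i j * G v u e))
        _ = ∑ e, ∑ f, (gInv e f * G v u e) * ∑ i, ∑ j, gInv i j * G i j f := by
            refine Finset.sum_congr rfl fun e _ => Finset.sum_congr rfl fun f _ => ?_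
            simp only [Finset.mul_sum]
            exact Finset.sum_congr rfl fun i _ => Finset.sum_congr rfl fun j _ => by
              rw [hG3 f i j]; ring
        _ = 0 := by simp only [htrace, mul_zero, Finset.sum_const_zero]
    have d3 : ∑ i, ∑ j, gInv i j * (∑ e, ∑ f, gInv e f * G f i u * G j v e)
        = ∑ d, ∑ f, ∑ x, ∑ y, gInv d x * gInv f y * G d f u * G x y v := by
      calc ∑ i, ∑ j, gInv i j * (∑ e, ∑ f, gInv e f * G f i u * G j v e)
          = ∑ i, ∑ j, ∑ e, ∑ f, gInv i j * (gInv e f * G f i u * G j v e) := by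
            refine Finset.sum_congr rfl fun i _ => Finset.sum_congr rfl fun j _ => ?_
            simp only [Finset.mul_sum]
        _ = ∑ i, ∑ f, ∑ j, ∑ e, gInv i j * (gInv e f * G f i u * G j v e) :=
            Finset.sum_congr rfl fun i _ =>
              sum_rot3 (fun j e f => gInv i j * (gInv e f * G f i u * G j v e))
        _ = ∑ d, ∑ f, ∑ x, ∑ y, gInv d x * gInv f y * G d f u * G x y v := by
            refine Finset.sum_congr rfl fun i _ => Finset.sum_congr rfl fun f _ =>
              Finset.sum_congr rfl fun j _ => Finset.sum_congr rfl fun e _ => ?_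
            rw [hginv e f, hGsym₁ f i u, hGsym₂ j v e]
            ring
    have d4 : ∑ i, ∑ j, gInv i j * (∑ e, ∑ f, gInv e f * G f i u * G v j e)
        = ∑ d, ∑ f, ∑ x, ∑ y, gInv d x * gInv f y * G d f u * G x y v := by
      calc ∑ i, ∑ j, gInv i j * (∑ e, ∑ f, gInv e f * G f i u * G v j e)
          = ∑ i, ∑ j, ∑ e, ∑ f, gInv i j * (gInv e f * G f i u * G v j e) := by
            refine Finset.sum_congr rfl fun i _ => Finset.sum_congr rfl fun j _ => ?_
            simp only [Finset.mul_sum]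
        _ = ∑ i, ∑ f, ∑ j, ∑ e, gInv i j * (gInv e f * G f i u * G v j e) :=
            Finset.sum_congr rfl fun i _ =>
              sum_rot3 (fun j e f => gInv i j * (gInv e f * G f i u * G v j e))
        _ = ∑ d, ∑ f, ∑ x, ∑ y, gInv d x * gInv f y * G d f u * G x y v := by
            refine Finset.sum_congr rfl fun i _ => Finset.sum_congr rfl fun f _ =>
              Finset.sum_congr rfl fun j _ => Finset.sum_congr rfl fun e _ => ?_
            rw [hginv e f, hGsym₁ f i u, hGsym₁ v j e, hGsym₂ j v e]
            ring
    have d5 : ∑ i, ∑ j, gInv i j * (∑ e, ∑ f, gInv e f * G f i v * G j u e)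
        = ∑ d, ∑ f, ∑ x, ∑ y, gInv d x * gInv f y * G d f u * G x y v := by
      calc ∑ i, ∑ j, gInv i j * (∑ e, ∑ f, gInv e f * G f i v * G j u e)
          = ∑ i, ∑ j, ∑ e, ∑ f, gInv i j * (gInv e f * G f i v * G j u e) := by
            refine Finset.sum_congr rfl fun i _ => Finset.sum_congr rfl fun j _ => ?_
            simp only [Finset.mul_sum]
        _ = ∑ j, ∑ e, ∑ i, ∑ f, gInv i j * (gInv e f * G f i v * G j u e) :=
            (sum_rot3 (fun j e i => ∑ f, gInv i j * (gInv e f * G f i v * G j u e))).symm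
        _ = ∑ d, ∑ f, ∑ x, ∑ y, gInv d x * gInv f y * G d f u * G x y v := by
            refine Finset.sum_congr rfl fun j _ => Finset.sum_congr rfl fun e _ =>
              Finset.sum_congr rfl fun i _ => Finset.sum_congr rfl fun f _ => ?_
            rw [hginv i j, hGsym₂ j u e, hGsym₁ f i v]
            ring
    have d6 : ∑ i, ∑ j, gInv i j * (∑ e, ∑ f, gInv e f * G f i v * G u j e)
        = ∑ d, ∑ f, ∑ x, ∑ y, gInv d x * gInv f y * G d f u * G x y v := by
      calc ∑ i, ∑ j, gInv i j * (∑ e, ∑ f, gInv e f * G f i v * G u j e)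
          = ∑ i, ∑ j, ∑ e, ∑ f, gInv i j * (gInv e f * G f i v * G u j e) := by
            refine Finset.sum_congr rfl fun i _ => Finset.sum_congr rfl fun j _ => ?_
            simp only [Finset.mul_sum]
        _ = ∑ j, ∑ e, ∑ i, ∑ f, gInv i j * (gInv e f * G f i v * G u j e) :=
            (sum_rot3 (fun j e i => ∑ f, gInv i j * (gInv e f * G f i v * G u j e))).symm
        _ = ∑ d, ∑ f, ∑ x, ∑ y, gInv d x * gInv f y * G d f u * G x y v := by
            refine Finset.sum_congr rfl fun j _ => Finset.sum_congr rfl fun e _ =>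
              Finset.sum_congr rfl fun i _ => Finset.sum_congr rfl fun f _ => ?_
            rw [hginv i j, hGsym₁ u j e, hGsym₂ j u e, hGsym₁ f i v]
            ring
    have hlhs : ∑ i, ∑ j, gInv i j
          * (6 * sym3 (fun b c d => ∑ e, ∑ f, gInv e f * G f i b * G c d e) j u v)
        = 4 * (∑ d, ∑ f, ∑ x, ∑ y, gInv d x * gInv f y * G d f u * G x y v) := by
      calc ∑ i, ∑ j, gInv i j
            * (6 * sym3 (fun b c d => ∑ e, ∑ f, gInv e f * G f i b * G c d e) j u v)
          = ∑ i, ∑ j, (gInv i j * (∑ e, ∑ f, gInv e f * G f i j * G u v e)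
              + gInv i j * (∑ e, ∑ f, gInv e f * G f i j * G v u e)
              + gInv i j * (∑ e, ∑ f, gInv e f * G f i u * G j v e)
              + gInv i j * (∑ e, ∑ f, gInv e f * G f i u * G v j e)
              + gInv i j * (∑ e, ∑ f, gInv e f * G f i v * G j u e)
              + gInv i j * (∑ e, ∑ f, gInv e f * G f i v * G u j e)) := by
            refine Finset.sum_congr rfl fun i _ => Finset.sum_congr rfl fun j _ => ?_
            simp only [sym3]
            ring
        _ = (∑ i, ∑ j, gInv i j * (∑ e, ∑ f, gInv e f * G f i j * G u v e))
              + (∑ i, ∑ j, gInv i j * (∑ e, ∑ f, gInv e f * G f i j * G v u e))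
              + (∑ i, ∑ j, gInv i j * (∑ e, ∑ f, gInv e f * G f i u * G j v e))
              + (∑ i, ∑ j, gInv i j * (∑ e, ∑ f, gInv e f * G f i u * G v j e))
              + (∑ i, ∑ j, gInv i j * (∑ e, ∑ f, gInv e f * G f i v * G j u e))
              + (∑ i, ∑ j, gInv i j * (∑ e, ∑ f, gInv e f * G f i v * G u j e)) := by
            simp only [Finset.sum_add_distrib]
        _ = 4 * (∑ d, ∑ f, ∑ x, ∑ y, gInv d x * gInv f y * G d f u * G x y v) := by
            rw [d1, d2, d3, d4, d5, d6]; ring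
    rw [hlhs, hrhs] at key
    linarith [key]
  -- contraction helpers
  have hGm : ∀ f c, (∑ e, g e p * Gup5 gInv G e f c)
      = ∑ v, ∑ w, gInv f v * gInv c w * G p v w := by
    intro f c
    calc ∑ e, g e p * Gup5 gInv G e f c
        = ∑ e, ∑ u, (g p e * gInv e u) * (∑ v, ∑ w, gInv f v * gInv c w * G u v w) := by
          refine Finset.sum_congr rfl fun e _ => ?_
          simp only [Gup5, Finset.mul_sum, Finset.sum_mul]
          exact Finset.sum_congr rfl fun u _ => Finset.sum_congr rfl fun v _ =>
            Finset.sum_congr rfl fun w _ => by rw [hg e p]; ring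
      _ = ∑ u, ∑ e, (g p e * gInv e u) * (∑ v, ∑ w, gInv f v * gInv c w * G u v w) :=
          Finset.sum_comm
      _ = ∑ u, (∑ e, g p e * gInv e u) * (∑ v, ∑ w, gInv f v * gInv c w * G u v w) :=
          Finset.sum_congr rfl fun u _ => (Finset.sum_mul _ _ _).symm
      _ = ∑ v, ∑ w, gInv f v * gInv c w * G p v w := by
          simp [hδ1, ite_mul]
  have hSC : ∀ c, (∑ e, g e p * S5 gInv R a b c e) = R a b c p := by
    intro c
    calc ∑ e, g e p * S5 gInv R a b c e
        = ∑ e, ∑ x, (g p e * gInv e x) * R a b c x := by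
          refine Finset.sum_congr rfl fun e _ => ?_
          simp only [S5, Finset.mul_sum]
          exact Finset.sum_congr rfl fun x _ => by rw [hg e p]; ring
      _ = ∑ x, (∑ e, g p e * gInv e x) * R a b c x := by
          rw [Finset.sum_comm]
          exact Finset.sum_congr rfl fun x _ => (Finset.sum_mul _ _ _).symm
      _ = R a b c p := by simp [hδ1, ite_mul]
  have hGG : ∀ c, (∑ d, ∑ f, G d f q * Gup5 gInv G d f c)
      = 7/12 * (if c = q then 1 else 0) := by
    intro c
    calc ∑ d, ∑ f, G d f q * Gup5 gInv G d f c
        = ∑ d, ∑ f, ∑ u, ∑ v, ∑ w, G d f q * (gInv d u * gInv f v * gInv c w * G u v w) := by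
          refine Finset.sum_congr rfl fun d _ => Finset.sum_congr rfl fun f _ => ?_
          simp only [Gup5, Finset.mul_sum]
      _ = ∑ w, ∑ d, ∑ f, ∑ u, ∑ v, G d f q * (gInv d u * gInv f v * gInv c w * G u v w) :=
          sum_rot5 (fun d f u v w => G d f q * (gInv d u * gInv f v * gInv c w * G u v w))
      _ = ∑ w, gInv c w * (∑ d, ∑ f, ∑ u, ∑ v, gInv d u * gInv f v * G d f q * G u v w) := by
          refine Finset.sum_congr rfl fun w _ => ?_
          simp only [Finset.mul_sum]
          exact Finset.sum_congr rfl fun d _ => Finset.sum_congr rfl fun f _ =>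
            Finset.sum_congr rfl fun u _ => Finset.sum_congr rfl fun v _ => by ring
      _ = ∑ w, gInv c w * (7/12 * g q w) := by
          refine Finset.sum_congr rfl fun w _ => ?_
          rw [hQ q w]
      _ = 7/12 * (if c = q then 1 else 0) := by
          rw [show (∑ w, gInv c w * (7/12 * g q w)) = ∑ w, 7/12 * (gInv c w * g w q) from
            Finset.sum_congr rfl fun w _ => by rw [hg q w]; ring]
          rw [← Finset.mul_sum, hδ2 c q]
  -- the three contracted curvature sums
  have hC1 : (∑ d, ∑ e, ∑ f, g e p * G d f q * (∑ c, S5 gInv R a b c d * Gup5 gInv G e f c))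
      = ∑ d, ∑ f, ∑ c, ∑ v, ∑ w, ∑ x,
          gInv d x * R a b c x * G d f q * gInv f v * gInv c w * G p v w := by
    calc ∑ d, ∑ e, ∑ f, g e p * G d f q * (∑ c, S5 gInv R a b c d * Gup5 gInv G e f c)
        = ∑ d, ∑ f, ∑ e, g e p * G d f q * (∑ c, S5 gInv R a b c d * Gup5 gInv G e f c) :=
          Finset.sum_congr rfl fun d _ => Finset.sum_comm
      _ = ∑ d, ∑ f, ∑ c, S5 gInv R a b c d * (G d f q * (∑ e, g e p * Gup5 gInv G e f c)) := by
          refine Finset.sum_congr rfl fun d _ => Finset.sum_congr rfl fun f _ => ?_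
          calc ∑ e, g e p * G d f q * (∑ c, S5 gInv R a b c d * Gup5 gInv G e f c)
              = ∑ e, ∑ c, S5 gInv R a b c d * (G d f q * (g e p * Gup5 gInv G e f c)) := by
                refine Finset.sum_congr rfl fun e _ => ?_
                rw [Finset.mul_sum]
                exact Finset.sum_congr rfl fun c _ => by ring
            _ = ∑ c, ∑ e, S5 gInv R a b c d * (G d f q * (g e p * Gup5 gInv G e f c)) :=
                Finset.sum_comm
            _ = ∑ c, S5 gInv R a b c d * (G d f q * (∑ e, g e p * Gup5 gInv G e f c)) := by
                simp only [Finset.mul_sum]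
      _ = ∑ d, ∑ f, ∑ c, S5 gInv R a b c d
            * (G d f q * (∑ v, ∑ w, gInv f v * gInv c w * G p v w)) := by
          refine Finset.sum_congr rfl fun d _ => Finset.sum_congr rfl fun f _ =>
            Finset.sum_congr rfl fun c _ => ?_
          rw [hGm f c]
      _ = ∑ d, ∑ f, ∑ c, ∑ v, ∑ w, ∑ x,
            gInv d x * R a b c x * G d f q * gInv f v * gInv c w * G p v w := by
          refine Finset.sum_congr rfl fun d _ => Finset.sum_congr rfl fun f _ =>
            Finset.sum_congr rfl fun c _ => ?_
          simp only [S5, Finset.mul_sum, Finset.sum_mul]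
          exact Finset.sum_congr rfl fun v _ => Finset.sum_congr rfl fun w _ =>
            Finset.sum_congr rfl fun x _ => by ring
  have hC3 : (∑ d, ∑ e, ∑ f, g e p * G d f q * (∑ c, S5 gInv R a b c f * Gup5 gInv G d e c))
      = ∑ d, ∑ f, ∑ c, ∑ v, ∑ w, ∑ x,
          gInv d x * R a b c x * G d f q * gInv f v * gInv c w * G p v w := by
    calc ∑ d, ∑ e, ∑ f, g e p * G d f q * (∑ c, S5 gInv R a b c f * Gup5 gInv G d e c)
        = ∑ d, ∑ f, ∑ e, g e p * G d f q * (∑ c, S5 gInv R a b c f * Gup5 gInv G d e c) :=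
          Finset.sum_congr rfl fun d _ => Finset.sum_comm
      _ = ∑ d, ∑ f, ∑ c, S5 gInv R a b c f * (G d f q * (∑ e, g e p * Gup5 gInv G e d c)) := by
          refine Finset.sum_congr rfl fun d _ => Finset.sum_congr rfl fun f _ => ?_
          calc ∑ e, g e p * G d f q * (∑ c, S5 gInv R a b c f * Gup5 gInv G d e c)
              = ∑ e, ∑ c, S5 gInv R a b c f * (G d f q * (g e p * Gup5 gInv G e d c)) := by
                refine Finset.sum_congr rfl fun e _ => ?_
                rw [Finset.mul_sum]
                exact Finset.sum_congr rfl fun c _ => by rw [hGup_symm d e c]; ring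
            _ = ∑ c, ∑ e, S5 gInv R a b c f * (G d f q * (g e p * Gup5 gInv G e d c)) :=
                Finset.sum_comm
            _ = ∑ c, S5 gInv R a b c f * (G d f q * (∑ e, g e p * Gup5 gInv G e d c)) := by
                simp only [Finset.mul_sum]
      _ = ∑ d, ∑ f, ∑ c, S5 gInv R a b c f
            * (G d f q * (∑ v, ∑ w, gInv d v * gInv c w * G p v w)) := by
          refine Finset.sum_congr rfl fun d _ => Finset.sum_congr rfl fun f _ =>
            Finset.sum_congr rfl fun c _ => ?_
          rw [hGm d c]
      _ = ∑ d, ∑ f, ∑ c, S5 gInv R a b c d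
            * (G f d q * (∑ v, ∑ w, gInv f v * gInv c w * G p v w)) :=
          Finset.sum_comm
      _ = ∑ d, ∑ f, ∑ c, S5 gInv R a b c d
            * (G d f q * (∑ v, ∑ w, gInv f v * gInv c w * G p v w)) := by
          refine Finset.sum_congr rfl fun d _ => Finset.sum_congr rfl fun f _ =>
            Finset.sum_congr rfl fun c _ => ?_
          rw [hGsym₁ f d q]
      _ = ∑ d, ∑ f, ∑ c, ∑ v, ∑ w, ∑ x,
            gInv d x * R a b c x * G d f q * gInv f v * gInv c w * G p v w := by
          refine Finset.sum_congr rfl fun d _ => Finset.sum_congr rfl fun f _ =>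
            Finset.sum_congr rfl fun c _ => ?_
          simp only [S5, Finset.mul_sum, Finset.sum_mul]
          exact Finset.sum_congr rfl fun v _ => Finset.sum_congr rfl fun w _ =>
            Finset.sum_congr rfl fun x _ => by ring
  have hC2 : (∑ d, ∑ e, ∑ f, g e p * G d f q * (∑ c, S5 gInv R a b c e * Gup5 gInv G d f c))
      = 7/12 * R a b q p := by
    calc ∑ d, ∑ e, ∑ f, g e p * G d f q * (∑ c, S5 gInv R a b c e * Gup5 gInv G d f c)
        = ∑ d, ∑ f, ∑ e, g e p * G d f q * (∑ c, S5 gInv R a b c e * Gup5 gInv G d f c) :=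
          Finset.sum_congr rfl fun d _ => Finset.sum_comm
      _ = ∑ d, ∑ f, ∑ c, (∑ e, g e p * S5 gInv R a b c e)
            * (G d f q * Gup5 gInv G d f c) := by
          refine Finset.sum_congr rfl fun d _ => Finset.sum_congr rfl fun f _ => ?_
          calc ∑ e, g e p * G d f q * (∑ c, S5 gInv R a b c e * Gup5 gInv G d f c)
              = ∑ e, ∑ c, (g e p * S5 gInv R a b c e) * (G d f q * Gup5 gInv G d f c) := by
                refine Finset.sum_congr rfl fun e _ => ?_
                rw [Finset.mul_sum]
                exact Finset.sum_congr rfl fun c _ => by ring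
            _ = ∑ c, ∑ e, (g e p * S5 gInv R a b c e) * (G d f q * Gup5 gInv G d f c) :=
                Finset.sum_comm
            _ = ∑ c, (∑ e, g e p * S5 gInv R a b c e) * (G d f q * Gup5 gInv G d f c) :=
                Finset.sum_congr rfl fun c _ => (Finset.sum_mul _ _ _).symm
      _ = ∑ d, ∑ f, ∑ c, R a b c p * (G d f q * Gup5 gInv G d f c) := by
          refine Finset.sum_congr rfl fun d _ => Finset.sum_congr rfl fun f _ =>
            Finset.sum_congr rfl fun c _ => ?_
          rw [hSC c]
      _ = ∑ c, ∑ d, ∑ f, R a b c p * (G d f q * Gup5 gInv G d f c) :=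
          sum_rot3 (fun d f c => R a b c p * (G d f q * Gup5 gInv G d f c))
      _ = ∑ c, R a b c p * (∑ d, ∑ f, G d f q * Gup5 gInv G d f c) := by
          simp only [Finset.mul_sum]
      _ = ∑ c, R a b c p * (7/12 * (if c = q then 1 else 0)) := by
          refine Finset.sum_congr rfl fun c _ => ?_
          rw [hGG c]
      _ = 7/12 * R a b q p := by
          rw [Finset.sum_congr rfl fun c (_ : c ∈ Finset.univ) =>
            show R a b c p * (7/12 * (if c = q then 1 else 0))
              = if c = q then 7/12 * R a b c p else 0 from by
                by_cases h : c = q <;> simp [h] <;> ring]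
          rw [Finset.sum_ite_eq' Finset.univ q (fun c => 7/12 * R a b c p)]
          simp
  -- summing the three-term identity against `g e p * G d f q`
  have hzero : (∑ d, ∑ e, ∑ f, g e p * G d f q * (∑ c, S5 gInv R a b c d * Gup5 gInv G e f c))
      + (∑ d, ∑ e, ∑ f, g e p * G d f q * (∑ c, S5 gInv R a b c e * Gup5 gInv G d f c))
      + (∑ d, ∑ e, ∑ f, g e p * G d f q * (∑ c, S5 gInv R a b c f * Gup5 gInv G d e c))
      = 0 := by
    have hz : ∀ d e f : Fin 5, g e p * G d f q
        * ((∑ c, S5 gInv R a b c d * Gup5 gInv G e f c)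
          + (∑ c, S5 gInv R a b c e * Gup5 gInv G d f c)
          + (∑ c, S5 gInv R a b c f * Gup5 gInv G d e c)) = 0 := fun d e f => by
      rw [h3 d e f, mul_zero]
    calc (∑ d, ∑ e, ∑ f, g e p * G d f q * (∑ c, S5 gInv R a b c d * Gup5 gInv G e f c))
        + (∑ d, ∑ e, ∑ f, g e p * G d f q * (∑ c, S5 gInv R a b c e * Gup5 gInv G d f c))
        + (∑ d, ∑ e, ∑ f, g e p * G d f q * (∑ c, S5 gInv R a b c f * Gup5 gInv G d e c))
        = ∑ d, ∑ e, ∑ f, g e p * G d f q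
            * ((∑ c, S5 gInv R a b c d * Gup5 gInv G e f c)
              + (∑ c, S5 gInv R a b c e * Gup5 gInv G d f c)
              + (∑ c, S5 gInv R a b c f * Gup5 gInv G d e c)) := by
          simp only [mul_add, Finset.sum_add_distrib]
      _ = 0 := by simp only [hz, Finset.sum_const_zero]
  rw [hC1, hC2, hC3] at hzero
  -- hzero : E + 7/12 * R a b q p + E = 0
  -- now rewrite the goal
  have hX6 : (∑ c, ∑ d, ∑ c', ∑ d', R a b c d * gInv c c' * gInv d d'
        * (∑ e, ∑ f, gInv e f * G f p c' * G d' q e))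
      = ∑ d, ∑ f, ∑ c, ∑ v, ∑ w, ∑ x,
          gInv d x * R a b c x * G d f q * gInv f v * gInv c w * G p v w := by
    calc ∑ c, ∑ d, ∑ c', ∑ d', R a b c d * gInv c c' * gInv d d'
          * (∑ e, ∑ f, gInv e f * G f p c' * G d' q e)
        = ∑ c, ∑ x, ∑ w, ∑ d, ∑ f, ∑ v, R a b c x * gInv c w * gInv x d
            * (gInv f v * G v p w * G d q f) := by
          refine Finset.sum_congr rfl fun c _ => Finset.sum_congr rfl fun x _ =>
            Finset.sum_congr rfl fun w _ => Finset.sum_congr rfl fun d _ => ?_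
          simp only [Finset.mul_sum]
      _ = ∑ v, ∑ c, ∑ x, ∑ w, ∑ d, ∑ f, R a b c x * gInv c w * gInv x d
            * (gInv f v * G v p w * G d q f) :=
          sum_rot6 (fun c x w d f v => R a b c x * gInv c w * gInv x d
            * (gInv f v * G v p w * G d q f))
      _ = ∑ f, ∑ v, ∑ c, ∑ x, ∑ w, ∑ d, R a b c x * gInv c w * gInv x d
            * (gInv f v * G v p w * G d q f) :=
          sum_rot6 (fun v c x w d f => R a b c x * gInv c w * gInv x d
            * (gInv f v * G v p w * G d q f))
      _ = ∑ d, ∑ f, ∑ v, ∑ c, ∑ x, ∑ w, R a b c x * gInv c w * gInv x d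
            * (gInv f v * G v p w * G d q f) :=
          sum_rot6 (fun f v c x w d => R a b c x * gInv c w * gInv x d
            * (gInv f v * G v p w * G d q f))
      _ = ∑ d, ∑ f, ∑ c, ∑ v, ∑ x, ∑ w, R a b c x * gInv c w * gInv x d
            * (gInv f v * G v p w * G d q f) :=
          Finset.sum_congr rfl fun d _ => Finset.sum_congr rfl fun f _ =>
            Finset.sum_comm
      _ = ∑ d, ∑ f, ∑ c, ∑ v, ∑ w, ∑ x, R a b c x * gInv c w * gInv x d
            * (gInv f v * G v p w * G d q f) :=
          Finset.sum_congr rfl fun d _ => Finset.sum_congr rfl fun f _ =>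
            Finset.sum_congr rfl fun c _ => Finset.sum_congr rfl fun v _ =>
              Finset.sum_comm
      _ = ∑ d, ∑ f, ∑ c, ∑ v, ∑ w, ∑ x,
            gInv d x * R a b c x * G d f q * gInv f v * gInv c w * G p v w := by
          refine Finset.sum_congr rfl fun d _ => Finset.sum_congr rfl fun f _ =>
            Finset.sum_congr rfl fun c _ => Finset.sum_congr rfl fun v _ =>
              Finset.sum_congr rfl fun w _ => Finset.sum_congr rfl fun x _ => ?_
          rw [hginv x d, hGsym₁ v p w, hGsym₂ d q f]
          ring
  have hY : (∑ c, ∑ d, ∑ c', ∑ d', R a b c d * gInv c c' * gInv d d'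
        * (∑ e, ∑ f, gInv e f * G f p d' * G c' q e))
      = -(∑ c, ∑ d, ∑ c', ∑ d', R a b c d * gInv c c' * gInv d d'
        * (∑ e, ∑ f, gInv e f * G f p c' * G d' q e)) := by
    calc ∑ c, ∑ d, ∑ c', ∑ d', R a b c d * gInv c c' * gInv d d'
          * (∑ e, ∑ f, gInv e f * G f p d' * G c' q e)
        = ∑ c, ∑ d, ∑ c', ∑ d', R a b d c * gInv d c' * gInv c d'
            * (∑ e, ∑ f, gInv e f * G f p d' * G c' q e) := Finset.sum_comm
      _ = ∑ c, ∑ d, ∑ c', ∑ d', R a b d c * gInv d d' * gInv c c'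
            * (∑ e, ∑ f, gInv e f * G f p c' * G d' q e) :=
          Finset.sum_congr rfl fun c _ => Finset.sum_congr rfl fun d _ =>
            Finset.sum_comm
      _ = ∑ c, ∑ d, ∑ c', ∑ d', -(R a b c d * gInv c c' * gInv d d'
            * (∑ e, ∑ f, gInv e f * G f p c' * G d' q e)) := by
          refine Finset.sum_congr rfl fun c _ => Finset.sum_congr rfl fun d _ =>
            Finset.sum_congr rfl fun c' _ => Finset.sum_congr rfl fun d' _ => ?_
          rw [hR₂ a b d c]
          ring
      _ = -(∑ c, ∑ d, ∑ c', ∑ d', R a b c d * gInv c c' * gInv d d'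
            * (∑ e, ∑ f, gInv e f * G f p c' * G d' q e)) := by
          simp only [Finset.sum_neg_distrib]
  calc ∑ c, ∑ d, R a b c d * (∑ c', ∑ d', gInv c c' * gInv d d' * Fchi gInv G c' d' p q)
      = ∑ c, ∑ d, ∑ c', ∑ d',
          (3 * (R a b c d * gInv c c' * gInv d d' * (∑ e, ∑ f, gInv e f * G f p c' * G d' q e))
          - 3 * (R a b c d * gInv c c' * gInv d d' * (∑ e, ∑ f, gInv e f * G f p d' * G c' q e))) := by
        refine Finset.sum_congr rfl fun c _ => Finset.sum_congr rfl fun d _ => ?_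
        rw [Finset.mul_sum]
        refine Finset.sum_congr rfl fun c' _ => ?_
        rw [Finset.mul_sum]
        refine Finset.sum_congr rfl fun d' _ => ?_
        simp only [Fchi, chi]
        ring
    _ = 3 * (∑ c, ∑ d, ∑ c', ∑ d', R a b c d * gInv c c' * gInv d d'
            * (∑ e, ∑ f, gInv e f * G f p c' * G d' q e))
        - 3 * (∑ c, ∑ d, ∑ c', ∑ d', R a b c d * gInv c c' * gInv d d'
            * (∑ e, ∑ f, gInv e f * G f p d' * G c' q e)) := by
        simp only [Finset.sum_sub_distrib, ← Finset.mul_sum]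
    _ = 6 * (∑ d, ∑ f, ∑ c, ∑ v, ∑ w, ∑ x,
          gInv d x * R a b c x * G d f q * gInv f v * gInv c w * G p v w) := by
        rw [hY, hX6]; ring
    _ = 7/4 * R a b p q := by
        have := hR₂ a b p q
        linarith [hzero, hR₂ a b p q]
end
end
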